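/- arXiv:1808.08764 — 2 statements merged into one kernel-verified Lean document; each statement's English description precedes it below -/
import Mathlib

section
/- For Hermitian positive definite matrices p₁ and p₂ and any invertible complex matrix a, the affine-invariant Riemannian distance δ_R(p₁,p₂) = ‖Log(p₁^{-1/2} p₂ p₁^{-1/2})‖_F is invariant under congruence: δ_R(a* p₁ a, a* p₂ a) = δ_R(p₁, p₂). -/
open Matrix
open scoped ComplexOrder Classical

/-!
Put `q = p₁^{1/2}` and `m = (a* p₁ a)^{1/2}`. Since `m m* = a* p₁ a = (a* q)(a* q)*`, the matrix
`u = m⁻¹ a* q` is unitary, and `u (q⁻¹ p₂ q⁻¹) u* = m⁻¹ (a* p₂ a) m⁻¹`. The logarithm, like every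
function of the continuous functional calculus, commutes with the ⋆-automorphism `x ↦ u x u*`, and
the Frobenius norm is invariant under it.
-/

/-- Matrix logarithm of a Hermitian (in particular HPD) matrix, via the spectral theorem. -/
noncomputable def mLog {d : ℕ} (A : Matrix (Fin d) (Fin d) ℂ) : Matrix (Fin d) (Fin d) ℂ :=
  if hA : A.IsHermitian then
    (hA.eigenvectorUnitary : Matrix (Fin d) (Fin d) ℂ) *
      Matrix.diagonal (fun i => (Real.log (hA.eigenvalues i) : ℂ)) *
      (star hA.eigenvectorUnitary : Matrix (Fin d) (Fin d) ℂ)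
  else 0

/-- Matrix exponential. -/
noncomputable def mExp {d : ℕ} (A : Matrix (Fin d) (Fin d) ℂ) : Matrix (Fin d) (Fin d) ℂ :=
  NormedSpace.exp A

/-- Hermitian positive (semi)definite square root. -/
noncomputable def msqrt {d : ℕ} (A : Matrix (Fin d) (Fin d) ℂ) : Matrix (Fin d) (Fin d) ℂ :=
  if hA : A.PosSemidef then
    hA.1.eigenvectorUnitary.1 * diagonal ((↑) ∘ (√·) ∘ hA.1.eigenvalues) *
      (star hA.1.eigenvectorUnitary : Matrix (Fin d) (Fin d) ℂ)
  else 1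

/-- Frobenius norm. -/
noncomputable def frobNorm {d : ℕ} (A : Matrix (Fin d) (Fin d) ℂ) : ℝ :=
  Real.sqrt ((Aᴴ * A).trace.re)

/-- Affine-invariant Riemannian distance. -/
noncomputable def deltaR {d : ℕ} (p₁ p₂ : Matrix (Fin d) (Fin d) ℂ) : ℝ :=
  frobNorm (mLog ((msqrt p₁)⁻¹ * p₂ * (msqrt p₁)⁻¹))

/-- Real matrix power of an HPD matrix: `x^t = Exp (t • Log x)`. -/
noncomputable def mPow {d : ℕ} (A : Matrix (Fin d) (Fin d) ℂ) (t : ℝ) : Matrix (Fin d) (Fin d) ℂ :=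
  mExp ((t : ℂ) • mLog A)

/-- Riemannian logarithmic map at `p`. -/
noncomputable def logMap {d : ℕ} (p q : Matrix (Fin d) (Fin d) ℂ) : Matrix (Fin d) (Fin d) ℂ :=
  msqrt p * mLog ((msqrt p)⁻¹ * q * (msqrt p)⁻¹) * msqrt p

/-- Riemannian exponential map at `p`. -/
noncomputable def expMap {d : ℕ} (p h : Matrix (Fin d) (Fin d) ℂ) : Matrix (Fin d) (Fin d) ℂ :=
  msqrt p * mExp ((msqrt p)⁻¹ * h * (msqrt p)⁻¹) * msqrt p

/-- Affine-invariant geodesic from `p₁` to `p₂`. -/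
noncomputable def geo {d : ℕ} (p₁ p₂ : Matrix (Fin d) (Fin d) ℂ) (t : ℝ) :
    Matrix (Fin d) (Fin d) ℂ :=
  msqrt p₁ * mPow ((msqrt p₁)⁻¹ * p₂ * (msqrt p₁)⁻¹) t * msqrt p₁

section UnitaryConj
variable {A : Type*} [Ring A] [StarRing A] [TopologicalSpace A] [IsTopologicalRing A]
  [Algebra ℝ A] [ContinuousFunctionalCalculus ℝ A IsSelfAdjoint] [ContinuousMap.UniqueHom ℝ A]

lemma cfc_unitary_conj (f : ℝ → ℝ) {u : A} (hu : u ∈ unitary A) (a : A)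
    (hf : ContinuousOn f (spectrum ℝ a) := by cfc_cont_tac) (ha : IsSelfAdjoint a := by cfc_tac) :
    cfc f (u * a * star u) = u * cfc f a * star u := by
  have hcont : Continuous (Unitary.conjStarAlgAut ℝ A ⟨u, hu⟩) :=
    show Continuous fun x ↦ u * x * star u by fun_prop
  exact (StarAlgHomClass.map_cfc (S := ℝ) (Unitary.conjStarAlgAut ℝ A ⟨u, hu⟩) f a hf hcont ha
    (ha.conjugate u)).symm

end UnitaryConj

lemma Matrix.inv_mul_mem_unitary {n R : Type*} [Fintype n] [DecidableEq n] [CommRing R]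
    [StarRing R] {m b : Matrix n n R} (hm : IsUnit m) (h : m * mᴴ = b * bᴴ) :
    m⁻¹ * b ∈ unitary _ := by
  have hm' : IsUnit m.det := (isUnit_iff_isUnit_det m).mp hm
  rw [← Matrix.unitaryGroup, mem_unitaryGroup_iff, star_eq_conjTranspose, conjTranspose_mul,
    conjTranspose_nonsing_inv, Matrix.mul_assoc, ← Matrix.mul_assoc b, ← h, Matrix.mul_assoc,
    mul_nonsing_inv _ (by simpa using hm'), Matrix.mul_one, nonsing_inv_mul _ hm']

section HermitianMatrix
variable {d : ℕ}

lemma mLog_eq_cfc {A : Matrix (Fin d) (Fin d) ℂ} (hA : A.IsHermitian) :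
    mLog A = cfc Real.log A := by
  rw [hA.cfc_eq, mLog, dif_pos hA]
  rfl

lemma msqrt_eq_cfc {A : Matrix (Fin d) (Fin d) ℂ} (hA : A.PosSemidef) :
    msqrt A = cfc Real.sqrt A := by
  rw [hA.1.cfc_eq, msqrt, dif_pos hA]
  rfl

lemma mLog_unitary_conj {u : Matrix (Fin d) (Fin d) ℂ} (hu : u ∈ unitary _)
    {A : Matrix (Fin d) (Fin d) ℂ} (hA : A.IsHermitian) :
    mLog (u * A * uᴴ) = u * mLog A * uᴴ := by
  rw [mLog_eq_cfc hA, mLog_eq_cfc (isHermitian_mul_mul_conjTranspose u hA)]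
  exact cfc_unitary_conj _ hu _ (A.finite_real_spectrum.continuousOn _) hA

lemma frobNorm_unitary_conj {u : Matrix (Fin d) (Fin d) ℂ} (hu : u ∈ unitary _)
    (Y : Matrix (Fin d) (Fin d) ℂ) : frobNorm (u * Y * uᴴ) = frobNorm Y := by
  have huu : uᴴ * u = 1 := Unitary.star_mul_self_of_mem hu
  have h : (u * Y * uᴴ)ᴴ * (u * Y * uᴴ) = u * (Yᴴ * Y) * uᴴ := by
    simp only [conjTranspose_mul, conjTranspose_conjTranspose, Matrix.mul_assoc,
      ← Matrix.mul_assoc uᴴ u, huu, Matrix.one_mul]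
  rw [frobNorm, frobNorm, h, trace_mul_cycle, huu, Matrix.one_mul]

lemma isHermitian_msqrt {A : Matrix (Fin d) (Fin d) ℂ} (hA : A.PosSemidef) :
    (msqrt A).IsHermitian := by
  rw [msqrt_eq_cfc hA]
  exact cfc_predicate _ _

lemma msqrt_mul_self {A : Matrix (Fin d) (Fin d) ℂ} (hA : A.PosSemidef) :
    msqrt A * msqrt A = A := by
  have hspec : ∀ x ∈ spectrum ℝ A, 0 ≤ x := by
    rw [hA.1.spectrum_real_eq_range_eigenvalues]
    rintro _ ⟨i, rfl⟩
    exact hA.eigenvalues_nonneg i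
  calc msqrt A * msqrt A = cfc (fun x ↦ √x * √x) A := by rw [msqrt_eq_cfc hA, cfc_mul _ _ A]
    _ = cfc id A := cfc_congr fun x hx ↦ Real.mul_self_sqrt (hspec x hx)
    _ = A := cfc_id ℝ A hA.1

lemma isUnit_msqrt {A : Matrix (Fin d) (Fin d) ℂ} (hA : A.PosDef) : IsUnit (msqrt A) :=
  isUnit_of_mul_isUnit_left ((msqrt_mul_self hA.posSemidef).symm ▸ hA.isUnit)

end HermitianMatrix

theorem deltaR_congruence_invariant {d : ℕ} (p₁ p₂ a : Matrix (Fin d) (Fin d) ℂ)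
    (hp₁ : p₁.PosDef) (hp₂ : p₂.PosDef) (ha : IsUnit a.det) :
    deltaR (aᴴ * p₁ * a) (aᴴ * p₂ * a) = deltaR p₁ p₂ := by
  have hap₁ : (aᴴ * p₁ * a).PosDef :=
    hp₁.conjTranspose_mul_mul_same (mulVec_injective_of_isUnit ((isUnit_iff_isUnit_det a).mpr ha))
  set q := msqrt p₁
  set m := msqrt (aᴴ * p₁ * a)
  have hq : qᴴ = q := (isHermitian_msqrt hp₁.posSemidef).eq
  have hm : mᴴ = m := (isHermitian_msqrt hap₁.posSemidef).eq
  have hq_det : IsUnit q.det := (isUnit_iff_isUnit_det q).mp (isUnit_msqrt hp₁)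
  have hqq : q * q = p₁ := msqrt_mul_self hp₁.posSemidef
  have hu : m⁻¹ * (aᴴ * q) ∈ unitary _ := by
    refine inv_mul_mem_unitary (isUnit_msqrt hap₁) ?_
    rw [hm, msqrt_mul_self hap₁.posSemidef, conjTranspose_mul, hq, conjTranspose_conjTranspose,
      ← hqq]
    simp only [Matrix.mul_assoc]
  have hconj : m⁻¹ * (aᴴ * p₂ * a) * m⁻¹ =
      (m⁻¹ * (aᴴ * q)) * (q⁻¹ * p₂ * q⁻¹) * (m⁻¹ * (aᴴ * q))ᴴ := by
    simp only [conjTranspose_mul, conjTranspose_nonsing_inv, hq, hm, conjTranspose_conjTranspose,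
      Matrix.mul_assoc, mul_nonsing_inv_cancel_left _ _ hq_det, nonsing_inv_mul_cancel_left _ _ hq_det]
  have hX : (q⁻¹ * p₂ * q⁻¹).IsHermitian := by
    simpa [conjTranspose_nonsing_inv, hq] using isHermitian_conjTranspose_mul_mul q⁻¹ hp₂.1
  rw [deltaR, deltaR, hconj, mLog_unitary_conj hu hX, frobNorm_unitary_conj hu]
end

section
/- The trace of the whitened wavelet coefficient of a noisy observation decomposes additively: if X_{k} = γ_{k}^{1/2} ε_{k} γ_{k}^{1/2} for all k (an intrinsic signal plus noise model), then for the one-step coarsening with equal weights, Tr(Log(M^X)) = Tr(Log(M^γ)) + Tr(Log(M^ε)), where M^X, M^γ, M^ε denote the respective intrinsic weighted means satisfying the Karcher mean equation with the same weights. Specifically: if M^X, M^γ, M^ε are Hermitian positive definite matrices satisfying M = Exp_M(Σ_k w_k Log_M(Y_k)) for Y ∈ {X, γ, ε} with weights w_k summing to 1, and Tr(Log(X_k)) = Tr(Log(γ_k)) + Tr(Log(ε_k)) for all k, then Tr(Log(M^X)) = Σ_k w_k Tr(Log(X_k)), and consequently Tr(Log(M^X)) = Tr(Log(M^γ)) +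 Tr(Log(M^ε)). -/
open Matrix
open scoped ComplexOrder Classical

/-
With `P = M^{1/2}`, the Karcher equation reads `P Exp(Σ w_k Log(P⁻¹ Y_k P⁻¹)) P = P P`, so
the Hermitian matrix `Σ w_k Log(P⁻¹ Y_k P⁻¹)` has exponential `1` and therefore vanishes.
Taking traces with `Tr Log A = log det A`, the congruence by `P⁻¹` only subtracts `log det M`,
and `Σ w_k = 1` gives `Tr Log M = Σ w_k Tr Log Y_k`. Applied to `X`, `γ`, `ε`, the
decomposition is then linear.
-/

section

variable {d : ℕ}

lemma mLog_isHermitian (A : Matrix (Fin d) (Fin d) ℂ) : (mLog A).IsHermitian := by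
  by_cases hA : A.IsHermitian
  · rw [mLog_eq_cfc hA]
    exact cfc_predicate _ _
  · rw [mLog, dif_neg hA]
    exact isHermitian_zero

lemma msqrt_isHermitian (A : Matrix (Fin d) (Fin d) ℂ) : (msqrt A).IsHermitian := by
  by_cases hA : A.PosSemidef
  · rw [msqrt_eq_cfc hA]
    exact cfc_predicate _ _
  · rw [msqrt, dif_neg hA]
    exact isHermitian_one

open scoped Matrix.Norms.L2Operator in
lemma eq_zero_of_mExp_eq_one {A : Matrix (Fin d) (Fin d) ℂ} (hA : A.IsHermitian)
    (h : mExp A = 1) : A = 0 := by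
  rw [← CFC.log_exp A hA.isSelfAdjoint, ← mExp, h, CFC.log_one]

lemma trace_mLog {A : Matrix (Fin d) (Fin d) ℂ} (hA : A.PosDef) :
    (mLog A).trace = Real.log A.det.re := by
  have hdet : A.det = ((∏ i, hA.1.eigenvalues i : ℝ) : ℂ) := by
    rw [hA.1.det_eq_prod_eigenvalues]
    push_cast
    rfl
  rw [hdet, Complex.ofReal_re, Real.log_prod fun i _ => (hA.eigenvalues_pos i).ne', mLog,
    dif_pos hA.1, trace_mul_cycle, mem_unitaryGroup_iff'.mp hA.1.eigenvectorUnitary.2, one_mul,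
    trace_diagonal, Complex.ofReal_sum]

lemma Complex.log_re_mul_of_pos {a b : ℂ} (ha : 0 < a) (hb : 0 < b) :
    Real.log (a * b).re = Real.log a.re + Real.log b.re := by
  obtain ⟨ha, ha'⟩ := Complex.pos_iff.mp ha
  obtain ⟨hb, -⟩ := Complex.pos_iff.mp hb
  rw [Complex.mul_re, ← ha', zero_mul, sub_zero, Real.log_mul ha.ne' hb.ne']

lemma trace_mLog_nonsing_inv_sandwich {P M Y : Matrix (Fin d) (Fin d) ℂ} (hPH : P.IsHermitian)
    (hP : IsUnit P) (hPM : P * P = M) (hM : M.PosDef) (hY : Y.PosDef) :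
    (mLog (P⁻¹ * Y * P⁻¹)).trace = (mLog Y).trace - (mLog M).trace := by
  have hQ : (P⁻¹ * Y * P⁻¹).PosDef := by
    simpa only [hPH.inv.eq] using
      hY.conjTranspose_mul_mul_same (mulVec_injective_of_isUnit (isUnit_nonsing_inv_iff.mpr hP))
  have hdet : (P⁻¹ * Y * P⁻¹).det * M.det = Y.det := by
    rw [← det_mul, ← hPM, mul_assoc _ P⁻¹, ← mul_assoc P⁻¹ P,
      nonsing_inv_mul _ ((isUnit_iff_isUnit_det _).mp hP), one_mul, det_conj' hP]
  rw [trace_mLog hQ, trace_mLog hY, trace_mLog hM, ← hdet,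
    Complex.log_re_mul_of_pos hQ.det_pos hM.det_pos]
  push_cast
  ring

lemma logMap_isHermitian (M Y : Matrix (Fin d) (Fin d) ℂ) : (logMap M Y).IsHermitian := by
  simpa only [logMap, (msqrt_isHermitian M).eq] using
    isHermitian_mul_mul_conjTranspose (msqrt M) (mLog_isHermitian _)

lemma nonsing_inv_sandwich_cancel {P : Matrix (Fin d) (Fin d) ℂ} (hP : IsUnit P)
    (B : Matrix (Fin d) (Fin d) ℂ) : P⁻¹ * (P * B * P) * P⁻¹ = B := by
  have hdet := (isUnit_iff_isUnit_det P).mp hP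
  simp only [← mul_assoc, nonsing_inv_mul P hdet, one_mul]
  rw [mul_assoc, mul_nonsing_inv P hdet, mul_one]

lemma sandwich_nonsing_inv_cancel {P : Matrix (Fin d) (Fin d) ℂ} (hP : IsUnit P)
    (B : Matrix (Fin d) (Fin d) ℂ) : P * (P⁻¹ * B * P⁻¹) * P = B := by
  simpa only [nonsing_inv_nonsing_inv P ((isUnit_iff_isUnit_det P).mp hP)] using
    nonsing_inv_sandwich_cancel (isUnit_nonsing_inv_iff.mpr hP) B

lemma eq_zero_of_expMap_eq_self {M H : Matrix (Fin d) (Fin d) ℂ} (hM : M.PosDef)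
    (hH : H.IsHermitian) (h : expMap M H = M) : H = 0 := by
  set P := msqrt M
  have hP : IsUnit P := isUnit_msqrt hM
  have hPH : P⁻¹ᴴ = P⁻¹ := (msqrt_isHermitian M).inv.eq
  have hexp : mExp (P⁻¹ * H * P⁻¹) = 1 := by
    have h' : P * mExp (P⁻¹ * H * P⁻¹) * P = P * 1 * P := by
      rw [mul_one, msqrt_mul_self hM.posSemidef]
      exact h
    exact hP.mul_left_cancel (hP.mul_right_cancel h')
  have hconj : (P⁻¹ * H * P⁻¹).IsHermitian := by
    simpa only [hPH] using isHermitian_mul_mul_conjTranspose P⁻¹ hH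
  rw [← sandwich_nonsing_inv_cancel hP H, eq_zero_of_mExp_eq_one hconj hexp, mul_zero, zero_mul]

lemma trace_mLog_eq_sum_of_sum_logMap_eq_zero {ι : Type*} [Fintype ι]
    {Y : ι → Matrix (Fin d) (Fin d) ℂ} {w : ι → ℝ} {M : Matrix (Fin d) (Fin d) ℂ}
    (hw1 : ∑ k, w k = 1) (hY : ∀ k, (Y k).PosDef) (hM : M.PosDef)
    (h : ∑ k, (w k : ℂ) • logMap M (Y k) = 0) :
    (mLog M).trace = ∑ k, (w k : ℂ) * (mLog (Y k)).trace := by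
  set P := msqrt M with hPdef
  have hPH : P.IsHermitian := msqrt_isHermitian M
  have hP : IsUnit P := isUnit_msqrt hM
  have hPM : P * P = M := msqrt_mul_self hM.posSemidef
  have hsum : ∑ k, (w k : ℂ) • mLog (P⁻¹ * Y k * P⁻¹) = 0 := by
    simpa only [logMap, ← hPdef, Finset.mul_sum, Finset.sum_mul, mul_smul_comm, smul_mul_assoc,
      nonsing_inv_sandwich_cancel hP, mul_zero, zero_mul] using congrArg (P⁻¹ * · * P⁻¹) h
  have htrace := congrArg trace hsum
  simp only [trace_sum, trace_smul, smul_eq_mul, trace_zero,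
    trace_mLog_nonsing_inv_sandwich hPH hP hPM hM (hY _), mul_sub,
    Finset.sum_sub_distrib, ← Finset.sum_mul] at htrace
  have hw1' : ∑ k, (w k : ℂ) = 1 := by exact_mod_cast hw1
  rw [hw1', one_mul, sub_eq_zero] at htrace
  exact htrace.symm

lemma trace_mLog_eq_sum_of_karcher {ι : Type*} [Fintype ι]
    {Y : ι → Matrix (Fin d) (Fin d) ℂ} {w : ι → ℝ} {M : Matrix (Fin d) (Fin d) ℂ}
    (hw1 : ∑ k, w k = 1) (hY : ∀ k, (Y k).PosDef) (hM : M.PosDef)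
    (hK : M = expMap M (∑ k, (w k : ℂ) • logMap M (Y k))) :
    (mLog M).trace = ∑ k, (w k : ℂ) * (mLog (Y k)).trace := by
  have hH : (∑ k, (w k : ℂ) • logMap M (Y k)).IsHermitian :=
    isSelfAdjoint_sum _ fun k _ => (logMap_isHermitian M (Y k)).smul (Complex.conj_ofReal _)
  exact trace_mLog_eq_sum_of_sum_logMap_eq_zero hw1 hY hM (eq_zero_of_expMap_eq_self hM hH hK.symm)

end

theorem trace_mLog_karcher_mean_decomposition_general {d : ℕ} {ι : Type*} [Fintype ι]
    (X γ ε : ι → Matrix (Fin d) (Fin d) ℂ) (w : ι → ℝ)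
    (MX Mγ Mε : Matrix (Fin d) (Fin d) ℂ)
    (hw1 : ∑ k, w k = 1)
    (hX : ∀ k, (X k).PosDef) (hγ : ∀ k, (γ k).PosDef) (hε : ∀ k, (ε k).PosDef)
    (hMX : MX.PosDef) (hMγ : Mγ.PosDef) (hMε : Mε.PosDef)
    (hKX : MX = expMap MX (∑ k, (w k : ℂ) • logMap MX (X k)))
    (hKγ : Mγ = expMap Mγ (∑ k, (w k : ℂ) • logMap Mγ (γ k)))
    (hKε : Mε = expMap Mε (∑ k, (w k : ℂ) • logMap Mε (ε k)))
    (htr : ∀ k, (mLog (X k)).trace = (mLog (γ k)).trace + (mLog (ε k)).trace) :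
    (mLog MX).trace = ∑ k, (w k : ℂ) * (mLog (X k)).trace ∧
      (mLog MX).trace = (mLog Mγ).trace + (mLog Mε).trace := by
  have hMX_tr := trace_mLog_eq_sum_of_karcher hw1 hX hMX hKX
  refine ⟨hMX_tr, ?_⟩
  rw [hMX_tr, trace_mLog_eq_sum_of_karcher hw1 hγ hMγ hKγ,
    trace_mLog_eq_sum_of_karcher hw1 hε hMε hKε, ← Finset.sum_add_distrib]
  simp only [htr, mul_add]

theorem trace_mLog_karcher_mean_decomposition {d : ℕ} {ι : Type*} [Fintype ι]
    (X γ ε : ι → Matrix (Fin d) (Fin d) ℂ) (w : ι → ℝ)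
    (MX Mγ Mε : Matrix (Fin d) (Fin d) ℂ)
    (hw0 : ∀ k, 0 ≤ w k) (hw1 : ∑ k, w k = 1)
    (hX : ∀ k, (X k).PosDef) (hγ : ∀ k, (γ k).PosDef) (hε : ∀ k, (ε k).PosDef)
    (hMX : MX.PosDef) (hMγ : Mγ.PosDef) (hMε : Mε.PosDef)
    (hmodel : ∀ k, X k = msqrt (γ k) * ε k * msqrt (γ k))
    (hKX : MX = expMap MX (∑ k, (w k : ℂ) • logMap MX (X k)))
    (hKγ : Mγ = expMap Mγ (∑ k, (w k : ℂ) • logMap Mγ (γ k)))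
    (hKε : Mε = expMap Mε (∑ k, (w k : ℂ) • logMap Mε (ε k)))
    (htr : ∀ k, (mLog (X k)).trace = (mLog (γ k)).trace + (mLog (ε k)).trace) :
    (mLog MX).trace = ∑ k, (w k : ℂ) * (mLog (X k)).trace ∧
      (mLog MX).trace = (mLog Mγ).trace + (mLog Mε).trace :=
  trace_mLog_karcher_mean_decomposition_general X γ ε w MX Mγ Mε hw1 hX hγ hε hMX hMγ hMε hKX hKγ
    hKε htr
end
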